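/- arXiv:2401.15608 — 4 statements merged into one kernel-verified Lean document; each statement's English description precedes it below -/
import Mathlib

section
/- Let N = 2M be a positive even integer, μ > 0, and α ∈ (0,1). Define N×N complex matrices D₁ and D₂ with entries indexed by j, l ∈ {0, 1, …, N−1}: (D₁)_{j,l} = (1/N) Σ_{k=−M}^{M} (1/c_k) · i·(kμ)·|kμ|^{α−1} · exp(2πi·k·(j−l)/N) and (D₂)_{j,l} = −(1/N) Σ_{k=−M}^{M} (1/c_k) · |kμ|^{2α} · exp(2πi·k·(j−l)/N), where c_k = 1 for |k| < M, c_k = 2 for k = ±M, and the k = 0 term of the first sum is taken to be 0. Then for all j, l: (D₂)_{j,l} = (D₁²)_{j,l} − (−1)^{j+l} · (1/N) · (Mμ)^{2α}, where D₁² = D₁·D₁ is the matrix product. -/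
/-!
Write `ω = exp (2πi/N)`. Both matrices are Fourier multipliers `(1/N) ∑_{|k| ≤ M} a_k ω^{k(j-l)}`,
and since `ω^{±M} = -1` the two Nyquist modes `k = ±M` contribute `(a_M + a_{-M}) (-1)^{j+l} / N`.
The symbol of `D₁` is odd, so these modes cancel and only `|k| < M` remains. No two of those
frequencies are congruent mod `N`, so by discrete orthogonality `D₁²` is the multiplier with the
squared symbol, which agrees with the symbol of `D₂` for `|k| < M`. What is left over is the
Nyquist contribution `-(Mμ)^{2α} (-1)^{j+l} / N` of `D₂`.
-/

open Complex Finset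

section FourierMultiplier

variable {K : Type*} [Field K] {N M : ℕ} {ζ : K}

theorem IsPrimitiveRoot.sum_zpow_mul_eq_ite [NeZero N] (hζ : IsPrimitiveRoot ζ N) (d : ℤ) :
    ∑ m : Fin N, ζ ^ (d * ((m : ℕ) : ℤ)) = if (N : ℤ) ∣ d then (N : K) else 0 := by
  simp_rw [zpow_mul, zpow_natCast]
  rw [Fin.sum_univ_eq_sum_range (fun m => (ζ ^ d) ^ m) N]
  split_ifs with hd
  · simp [(hζ.zpow_eq_one_iff_dvd d).mpr hd]
  · rw [geom_sum_eq ((hζ.zpow_eq_one_iff_dvd d).not.mpr hd), ← zpow_natCast, ← zpow_mul,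
      mul_comm, zpow_mul, zpow_natCast, hζ.pow_eq_one, one_zpow, sub_self, zero_div]

theorem IsPrimitiveRoot.pow_eq_neg_one (hζ : IsPrimitiveRoot ζ (2 * M)) (hM : M ≠ 0) :
    ζ ^ M = -1 := by
  have h := hζ.pow_of_dvd hM (dvd_mul_left M 2)
  rw [Nat.mul_div_cancel _ (Nat.pos_of_ne_zero hM)] at h
  exact h.eq_neg_one_of_two_right

theorem neg_one_zpow_natCast_sub (j l : ℕ) : (-1 : K) ^ ((j : ℤ) - l) = (-1) ^ (j + l) := by
  rw [zpow_sub₀ (by norm_num), zpow_natCast, zpow_natCast, div_eq_mul_inv, ← inv_pow, inv_neg_one,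
    pow_add]

def fourierMultiplierMatrix (N : ℕ) (ζ : K) (S : Finset ℤ) (a : ℤ → K) :
    Matrix (Fin N) (Fin N) K :=
  Matrix.of fun j l => 1 / (N : K) * ∑ k ∈ S, a k * ζ ^ (k * (((j : ℕ) : ℤ) - (l : ℕ)))

theorem fourierMultiplierMatrix_congr {S : Finset ℤ} {a b : ℤ → K} (h : ∀ k ∈ S, a k = b k) :
    fourierMultiplierMatrix N ζ S a = fourierMultiplierMatrix N ζ S b := by
  ext j l
  exact congrArg _ (sum_congr rfl fun k hk => by rw [h k hk])

/-- Without aliasing, multipliers compose by multiplying their symbols. -/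
theorem fourierMultiplierMatrix_mul (hζ : IsPrimitiveRoot ζ N) {S : Finset ℤ}
    (hS : ∀ k ∈ S, ∀ k' ∈ S, (N : ℤ) ∣ k' - k → k' = k) (a b : ℤ → K) :
    fourierMultiplierMatrix N ζ S a * fourierMultiplierMatrix N ζ S b =
      fourierMultiplierMatrix N ζ S (a * b) := by
  ext j l
  have : NeZero N := NeZero.of_pos j.pos
  have hN : (N : K) ≠ 0 := hζ.neZero'.out
  have hζ0 : ζ ≠ 0 := hζ.ne_zero (NeZero.ne N)
  have hexp : ∀ (m : Fin N) (k k' : ℤ),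
      ζ ^ (k * (((j : ℕ) : ℤ) - (m : ℕ))) * ζ ^ (k' * (((m : ℕ) : ℤ) - (l : ℕ))) =
        ζ ^ (k * (j : ℕ) - k' * (l : ℕ)) * ζ ^ ((k' - k) * ((m : ℕ) : ℤ)) := by
    intro m k k'
    rw [← zpow_add₀ hζ0, ← zpow_add₀ hζ0]
    ring_nf
  have horth : ∀ k ∈ S, ∀ k' ∈ S,
      ∑ m : Fin N, ζ ^ ((k' - k) * ((m : ℕ) : ℤ)) = if k' = k then (N : K) else 0 := by
    intro k hk k' hk'
    rw [hζ.sum_zpow_mul_eq_ite]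
    exact if_congr ⟨hS k hk k' hk', fun h => by simp [h]⟩ rfl rfl
  calc (fourierMultiplierMatrix N ζ S a * fourierMultiplierMatrix N ζ S b) j l
      = 1 / (N : K) ^ 2 * ∑ k ∈ S, ∑ k' ∈ S, a k * b k' * ζ ^ (k * (j : ℕ) - k' * (l : ℕ)) *
          ∑ m : Fin N, ζ ^ ((k' - k) * ((m : ℕ) : ℤ)) := by
        simp only [Matrix.mul_apply, fourierMultiplierMatrix, Matrix.of_apply]
        simp_rw [mul_mul_mul_comm (1 / (N : K)), sum_mul_sum, mul_sum]
        rw [sum_comm]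
        refine sum_congr rfl fun k _ => ?_
        rw [sum_comm]
        refine sum_congr rfl fun k' _ => ?_
        refine sum_congr rfl fun m _ => ?_
        rw [mul_assoc _ _ (ζ ^ _), ← hexp]
        ring
    _ = 1 / (N : K) ^ 2 * ∑ k ∈ S, a k * b k * ζ ^ (k * (j : ℕ) - k * (l : ℕ)) * N := by
        refine congrArg _ (sum_congr rfl fun k hk => ?_)
        simp_rw +contextual [horth k hk _, mul_ite, mul_zero, sum_ite_eq', if_pos hk]
    _ = (fourierMultiplierMatrix N ζ S (a * b)) j l := by
        simp only [fourierMultiplierMatrix, Matrix.of_apply, Pi.mul_apply, mul_sum]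
        refine sum_congr rfl fun k _ => ?_
        rw [← mul_sub]
        field_simp

theorem fourierMultiplierMatrix_Icc_apply (hζ : IsPrimitiveRoot ζ (2 * M)) (a : ℤ → K)
    (j l : Fin (2 * M)) :
    fourierMultiplierMatrix (2 * M) ζ (Icc (-(M : ℤ)) M) a j l =
      fourierMultiplierMatrix (2 * M) ζ (Ioo (-(M : ℤ)) M) a j l +
        1 / ((2 * M : ℕ) : K) * (a M + a (-M)) * (-1) ^ ((j : ℕ) + (l : ℕ)) := by
  have hM : M ≠ 0 := by have := j.pos; omega
  have hM' : -(M : ℤ) < M := by omega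
  have hζM : ζ ^ (M : ℤ) = -1 := by rw [zpow_natCast, hζ.pow_eq_neg_one hM]
  simp only [fourierMultiplierMatrix, Matrix.of_apply]
  rw [← Ioc_insert_left hM'.le, ← Ioo_insert_right hM', sum_insert (by simp [hM]),
    sum_insert (by simp)]
  simp only [zpow_mul, zpow_neg, hζM, inv_neg_one, neg_one_zpow_natCast_sub]
  ring

end FourierMultiplier

theorem Int.eq_of_mem_Ioo_of_two_mul_dvd_sub {M k k' : ℤ} (hk : k ∈ Ioo (-M) M)
    (hk' : k' ∈ Ioo (-M) M) (h : 2 * M ∣ k' - k) : k' = k := by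
  rw [mem_Ioo] at hk hk'
  have := Int.eq_zero_of_abs_lt_dvd h (by rw [abs_lt]; omega)
  omega

theorem fourierMultiplierMatrix_exp_apply (N : ℕ) (S : Finset ℤ) (a : ℤ → ℂ) (j l : Fin N) :
    fourierMultiplierMatrix N (exp (2 * Real.pi * I / N)) S a j l =
      1 / (N : ℂ) * ∑ k ∈ S, a k *
        exp (2 * Real.pi * I * k * (((j : ℕ) : ℂ) - ((l : ℕ) : ℂ)) / N) := by
  rw [fourierMultiplierMatrix, Matrix.of_apply]
  refine congrArg _ (sum_congr rfl fun k _ => ?_)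
  rw [← exp_int_mul]
  push_cast
  ring_nf

theorem I_mul_mul_abs_rpow_sub_one_sq {α : ℝ} (hα : α ≠ 0) (x : ℝ) :
    (I * x * ((|x| ^ (α - 1) : ℝ) : ℂ)) ^ 2 = -((|x| ^ (2 * α) : ℝ) : ℂ) := by
  rcases eq_or_ne x 0 with rfl | hx
  · simp [Real.zero_rpow (mul_ne_zero two_ne_zero hα)]
  have habs : |x| * |x| ^ (α - 1) = |x| ^ α := by
    rw [Real.rpow_sub_one (abs_ne_zero.mpr hx)]
    field_simp
  have hreal : x ^ 2 * (|x| ^ (α - 1)) ^ 2 = |x| ^ (2 * α) := by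
    rw [← sq_abs, ← mul_pow, habs, mul_comm 2 α, Real.rpow_mul (abs_nonneg x), Real.rpow_two]
  calc (I * x * ((|x| ^ (α - 1) : ℝ) : ℂ)) ^ 2
      = I ^ 2 * ((x ^ 2 * (|x| ^ (α - 1)) ^ 2 : ℝ) : ℂ) := by push_cast; ring
    _ = -((|x| ^ (2 * α) : ℝ) : ℂ) := by rw [hreal, I_sq, neg_one_mul]

/-- At `k = 0` this is `0` whatever `|0| ^ (α - 1)` is, matching the convention that the
`k = 0` term of `D₁` vanishes. -/
noncomputable def fracDerivSymbol (c : ℤ → ℂ) (μ α : ℝ) (k : ℤ) : ℂ :=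
  1 / c k * (I * ((k * μ : ℝ) : ℂ) * ((|(k : ℝ) * μ| ^ (α - 1) : ℝ) : ℂ))

noncomputable def fracSecondDerivSymbol (c : ℤ → ℂ) (μ α : ℝ) (k : ℤ) : ℂ :=
  -(1 / c k * ((|(k : ℝ) * μ| ^ (2 * α) : ℝ) : ℂ))

section Symbols

variable {c : ℤ → ℂ} {μ α : ℝ} {k : ℤ}

theorem fracDerivSymbol_add_neg (hc : c (-k) = c k) :
    fracDerivSymbol c μ α k + fracDerivSymbol c μ α (-k) = 0 := by
  simp only [fracDerivSymbol, hc, Int.cast_neg, neg_mul, abs_neg, ofReal_neg]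
  ring

theorem fracDerivSymbol_mul_self (hα : α ≠ 0) (hc : c k = 1) :
    fracDerivSymbol c μ α k * fracDerivSymbol c μ α k = fracSecondDerivSymbol c μ α k := by
  simp only [fracDerivSymbol, fracSecondDerivSymbol, hc, ← sq, div_one, one_mul]
  exact I_mul_mul_abs_rpow_sub_one_sq hα _

theorem fracSecondDerivSymbol_natCast_add_neg (hμ : 0 ≤ μ) {M : ℕ} (hc : c M = 2)
    (hc' : c (-M) = 2) :
    fracSecondDerivSymbol c μ α M + fracSecondDerivSymbol c μ α (-M) =
      -((((M : ℝ) * μ) ^ (2 * α) : ℝ) : ℂ) := by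
  simp only [fracSecondDerivSymbol, hc, hc', Int.cast_neg, Int.cast_natCast, neg_mul, abs_neg,
    abs_of_nonneg (mul_nonneg (Nat.cast_nonneg M) hμ)]
  ring

end Symbols

theorem stmt_6_general (M : ℕ) (μ α : ℝ) (hμ : 0 < μ) (hα : α ∈ Set.Ioo (0 : ℝ) 1)
    (c : ℤ → ℂ) (hc : ∀ k : ℤ, c k = if k = (M : ℤ) ∨ k = -(M : ℤ) then 2 else 1)
    (D₁ D₂ : Matrix (Fin (2 * M)) (Fin (2 * M)) ℂ)
    (hD₁ : ∀ j l : Fin (2 * M), D₁ j l =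
      (1 / ((2 * M : ℕ) : ℂ)) * ∑ k ∈ Finset.Icc (-(M : ℤ)) (M : ℤ),
        (1 / c k) * (Complex.I * (((k : ℝ) * μ : ℝ) : ℂ)
            * ((|(k : ℝ) * μ| ^ (α - 1) : ℝ) : ℂ))
          * Complex.exp (2 * (Real.pi : ℂ) * Complex.I * (k : ℂ)
              * (((j : ℕ) : ℂ) - ((l : ℕ) : ℂ)) / ((2 * M : ℕ) : ℂ)))
    (hD₂ : ∀ j l : Fin (2 * M), D₂ j l =
      -((1 / ((2 * M : ℕ) : ℂ)) * ∑ k ∈ Finset.Icc (-(M : ℤ)) (M : ℤ),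
        (1 / c k) * ((|(k : ℝ) * μ| ^ (2 * α) : ℝ) : ℂ)
          * Complex.exp (2 * (Real.pi : ℂ) * Complex.I * (k : ℂ)
              * (((j : ℕ) : ℂ) - ((l : ℕ) : ℂ)) / ((2 * M : ℕ) : ℂ)))) :
    ∀ j l : Fin (2 * M), D₂ j l = (D₁ * D₁) j l
      - (-1 : ℂ) ^ ((j : ℕ) + (l : ℕ)) * (1 / ((2 * M : ℕ) : ℂ))
        * ((((M : ℝ) * μ) ^ (2 * α) : ℝ) : ℂ) := by
  intro j l
  set ω := exp (2 * Real.pi * I / (2 * M : ℕ))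
  have hω : IsPrimitiveRoot ω (2 * M) := isPrimitiveRoot_exp _ j.pos.ne'
  have hc_edge : c M = 2 ∧ c (-M) = 2 := by simp [hc]
  have hc_Ioo : ∀ k ∈ Ioo (-(M : ℤ)) M, c k = 1 := fun k hk => by
    rw [mem_Ioo] at hk
    rw [hc, if_neg (by omega)]
  have hD₁_Icc : D₁ = fourierMultiplierMatrix (2 * M) ω (Icc (-(M : ℤ)) M)
      (fracDerivSymbol c μ α) := by
    ext j l
    rw [hD₁, fourierMultiplierMatrix_exp_apply]
    rfl
  have hD₂_Icc : D₂ = fourierMultiplierMatrix (2 * M) ω (Icc (-(M : ℤ)) M)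
      (fracSecondDerivSymbol c μ α) := by
    ext j l
    rw [hD₂, fourierMultiplierMatrix_exp_apply, ← mul_neg, ← sum_neg_distrib]
    simp only [fracSecondDerivSymbol, neg_mul]
  have hD₁_Ioo : D₁ = fourierMultiplierMatrix (2 * M) ω (Ioo (-(M : ℤ)) M)
      (fracDerivSymbol c μ α) := by
    ext j l
    rw [hD₁_Icc, fourierMultiplierMatrix_Icc_apply hω,
      fracDerivSymbol_add_neg (hc_edge.2.trans hc_edge.1.symm), mul_zero, zero_mul, add_zero]
  rw [hD₂_Icc, fourierMultiplierMatrix_Icc_apply hω,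
    fracSecondDerivSymbol_natCast_add_neg hμ.le hc_edge.1 hc_edge.2, hD₁_Ioo,
    fourierMultiplierMatrix_mul hω fun k hk k' hk' h =>
      Int.eq_of_mem_Ioo_of_two_mul_dvd_sub hk hk' (by exact_mod_cast h),
    fourierMultiplierMatrix_congr (a := fracDerivSymbol c μ α * fracDerivSymbol c μ α) fun k hk =>
      fracDerivSymbol_mul_self hα.1.ne' (hc_Ioo k hk)]
  ring

/-- For the Fourier pseudospectral matrices `D₁`, `D₂` on `N = 2M` points,
`(D₂)_{j,l} = (D₁²)_{j,l} − (−1)^{j+l} (1/N) (Mμ)^{2α}`. -/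
theorem stmt_6 (M : ℕ) (hM : 0 < M) (μ α : ℝ) (hμ : 0 < μ) (hα : α ∈ Set.Ioo (0 : ℝ) 1)
    (c : ℤ → ℂ) (hc : ∀ k : ℤ, c k = if k = (M : ℤ) ∨ k = -(M : ℤ) then 2 else 1)
    (D₁ D₂ : Matrix (Fin (2 * M)) (Fin (2 * M)) ℂ)
    (hD₁ : ∀ j l : Fin (2 * M), D₁ j l =
      (1 / ((2 * M : ℕ) : ℂ)) * ∑ k ∈ Finset.Icc (-(M : ℤ)) (M : ℤ),
        (1 / c k) * (Complex.I * (((k : ℝ) * μ : ℝ) : ℂ)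
            * ((|(k : ℝ) * μ| ^ (α - 1) : ℝ) : ℂ))
          * Complex.exp (2 * (Real.pi : ℂ) * Complex.I * (k : ℂ)
              * (((j : ℕ) : ℂ) - ((l : ℕ) : ℂ)) / ((2 * M : ℕ) : ℂ)))
    (hD₂ : ∀ j l : Fin (2 * M), D₂ j l =
      -((1 / ((2 * M : ℕ) : ℂ)) * ∑ k ∈ Finset.Icc (-(M : ℤ)) (M : ℤ),
        (1 / c k) * ((|(k : ℝ) * μ| ^ (2 * α) : ℝ) : ℂ)
          * Complex.exp (2 * (Real.pi : ℂ) * Complex.I * (k : ℂ)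
              * (((j : ℕ) : ℂ) - ((l : ℕ) : ℂ)) / ((2 * M : ℕ) : ℂ)))) :
    ∀ j l : Fin (2 * M), D₂ j l = (D₁ * D₁) j l
      - (-1 : ℂ) ^ ((j : ℕ) + (l : ℕ)) * (1 / ((2 * M : ℕ) : ℂ))
        * ((((M : ℝ) * μ) ^ (2 * α) : ℝ) : ℂ) :=
  stmt_6_general M μ α hμ hα c hc D₁ D₂ hD₁ hD₂
end

section
/- Let N be a positive integer, Δt > 0, λ ∈ ℝ, σ ≥ 0, let D be a real symmetric N×N matrix, and let w ∈ ℝᴺ. Suppose φ, ψ ∈ ℂᴺ satisfy, for every index j, the midpoint-scheme equation i·(ψ_j − φ_j)/Δt + (D·m)_j − λ·|m_j|^{2σ}·m_j − w_j·m_j = 0, where m = (φ + ψ)/2 (and the real matrix D acts on the complex vector m entrywise-linearly). Then Σ_j |ψ_j|² = Σ_j |φ_j|². -/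
open Complex Finset ComplexConjugate Matrix

/-!
Write `m = (φ + ψ) / 2`. Pairing the scheme `i (ψ - φ) / τ + A m - V m = 0` with `m̄` and taking
imaginary parts, the Hermitian term `m̄ᵀ A m` and the real-potential term `Σ V_j |m_j|²` are
real, while `Im (m̄_j · i (ψ_j - φ_j)) = (|ψ_j|² - |φ_j|²) / 2`: the cross terms
`Re (φ̄_j ψ_j - ψ̄_j φ_j)` cancel.
-/

lemma im_conj_midpoint_mul_I_mul_sub (a b : ℂ) :
    (conj ((a + b) / 2) * (I * (b - a))).im = (‖b‖ ^ 2 - ‖a‖ ^ 2) / 2 := by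
  simp only [Complex.sq_norm, normSq_apply, mul_im, mul_re, conj_re, conj_im, div_re, div_im,
    add_re, add_im, sub_re, sub_im, I_re, I_im]
  norm_num
  ring

lemma im_conj_mul_ofReal_mul_self (r : ℝ) (z : ℂ) : (conj z * (r * z)).im = 0 := by
  simp only [mul_im, mul_re, conj_re, conj_im, ofReal_re, ofReal_im]
  ring

theorem sum_norm_sq_eq_of_midpoint_scheme {ι : Type*} [Fintype ι] {A : Matrix ι ι ℂ}
    (hA : A.IsHermitian) (V : ι → ℝ) {τ : ℝ} (hτ : τ ≠ 0) {φ ψ : ι → ℂ}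
    (hscheme : ∀ j, I * (ψ j - φ j) / τ + (A *ᵥ ((φ + ψ) / 2)) j - V j * ((φ j + ψ j) / 2) = 0) :
    ∑ j, ‖ψ j‖ ^ 2 = ∑ j, ‖φ j‖ ^ 2 := by
  set m : ι → ℂ := (φ + ψ) / 2 with hm
  have hstep : ∀ j, I * (ψ j - φ j) = τ * (V j * m j - (A *ᵥ m) j) := fun j => by
    have h := hscheme j
    rw [sub_eq_zero, ← eq_sub_iff_add_eq, div_eq_iff (ofReal_ne_zero.mpr hτ)] at h
    rw [h]
    simp only [hm, Pi.div_apply, Pi.add_apply, Pi.ofNat_apply]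
    ring
  have hpair : ∑ j, conj (m j) * (I * (ψ j - φ j))
      = τ * (∑ j, conj (m j) * (V j * m j) - star m ⬝ᵥ A *ᵥ m) := by
    simp only [hstep, dotProduct, Pi.star_apply, RCLike.star_def, mul_sub, Finset.mul_sum,
      ← Finset.sum_sub_distrib]
    exact Finset.sum_congr rfl fun j _ => by ring
  have him := congrArg Complex.im hpair
  simp only [im_sum, hm, Pi.div_apply, Pi.add_apply, Pi.ofNat_apply,
    im_conj_midpoint_mul_I_mul_sub] at him
  have hherm : (star m ⬝ᵥ A *ᵥ m).im = 0 := hA.im_star_dotProduct_mulVec_self m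
  simp only [hm, im_ofReal_mul, sub_im, im_sum, im_conj_mul_ofReal_mul_self, Finset.sum_const_zero,
    zero_sub] at him hherm
  rw [hherm, neg_zero, mul_zero, ← Finset.sum_div, Finset.sum_sub_distrib] at him
  linarith

theorem stmt_7_general (N : ℕ) (Δt : ℝ) (hΔt : 0 < Δt) (lam σ : ℝ)
    (D : Matrix (Fin N) (Fin N) ℝ) (hD : D.IsSymm) (w : Fin N → ℝ) (φ ψ : Fin N → ℂ)
    (hscheme : ∀ j : Fin N,
      Complex.I * (ψ j - φ j) / (Δt : ℂ)
        + (∑ l : Fin N, (D j l : ℂ) * ((φ l + ψ l) / 2))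
        - (lam : ℂ) * ((‖(φ j + ψ j) / 2‖ ^ (2 * σ) : ℝ) : ℂ)
            * ((φ j + ψ j) / 2)
        - (w j : ℂ) * ((φ j + ψ j) / 2) = 0) :
    ∑ j : Fin N, ‖ψ j‖ ^ 2 = ∑ j : Fin N, ‖φ j‖ ^ 2 := by
  have hA : (D.map ((↑) : ℝ → ℂ)).IsHermitian :=
    (Matrix.isHermitian_iff_isSymm.mpr hD).map _ fun r => (conj_ofReal r).symm
  refine sum_norm_sq_eq_of_midpoint_scheme hA (fun j => lam * ‖(φ j + ψ j) / 2‖ ^ (2 * σ) + w j)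
    hΔt.ne' fun j => ?_
  simp only [mulVec, dotProduct, map_apply, Pi.div_apply, Pi.add_apply, Pi.ofNat_apply]
  push_cast
  linear_combination hscheme j

/-- Discrete mass conservation for the stochastic midpoint scheme:
if `i(ψ_j − φ_j)/Δt + (D m)_j − λ|m_j|^{2σ} m_j − w_j m_j = 0` for all `j`, with
`m = (φ + ψ)/2` and `D` real symmetric, then `Σ |ψ_j|² = Σ |φ_j|²`. -/
theorem stmt_7 (N : ℕ) (hN : 0 < N) (Δt : ℝ) (hΔt : 0 < Δt) (lam σ : ℝ) (hσ : 0 ≤ σ)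
    (D : Matrix (Fin N) (Fin N) ℝ) (hD : D.IsSymm) (w : Fin N → ℝ) (φ ψ : Fin N → ℂ)
    (hscheme : ∀ j : Fin N,
      Complex.I * (ψ j - φ j) / (Δt : ℂ)
        + (∑ l : Fin N, (D j l : ℂ) * ((φ l + ψ l) / 2))
        - (lam : ℂ) * ((‖(φ j + ψ j) / 2‖ ^ (2 * σ) : ℝ) : ℂ)
            * ((φ j + ψ j) / 2)
        - (w j : ℂ) * ((φ j + ψ j) / 2) = 0) :
    ∑ j : Fin N, ‖ψ j‖ ^ 2 = ∑ j : Fin N, ‖φ j‖ ^ 2 :=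
  stmt_7_general N Δt hΔt lam σ D hD w φ ψ hscheme
end

section
/- Let n ≥ 1 be an integer and α ∈ (0,1). Let ρ : ℝ → ℝ be Lipschitz with Lipschitz constant L₀, with 0 ≤ ρ ≤ 1, ρ(s) = 0 for s ≤ 1/2, and ρ(s) = 1 for s ≥ 1. Then there exists a constant L₁ > 0, depending only on n, α, and L₀, such that for every real k ≥ 1 and every y ∈ ℝⁿ, ∫_{ℝⁿ} (ρ(|x|/k) − ρ(|y|/k))² / |x − y|^{n+2α} dx ≤ L₁ / k^{2α}. Consequently, if moreover α ∈ (1/2, 1), then sup_{y ∈ ℝⁿ} Σ_{k=1}^{∞} ∫_{ℝⁿ} (ρ(|x|/k) − ρ(|y|/k))² / |x − y|^{n+2α} dx < ∞. -/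
open MeasureTheory ENNReal NNReal

open Metric Set Real Module


-- finiteness of the model integral
lemma aux_I_lt_top (n : ℕ) {s : ℝ} (hs1 : (n:ℝ) < s) (hs2 : s < (n:ℝ) + 2) {c : ℝ}
    (hc : 0 ≤ c) :
    ∫⁻ w : EuclideanSpace ℝ (Fin n),
      ENNReal.ofReal ((min (c * ‖w‖) 1) ^ 2 * ‖w‖ ^ (-s)) < ⊤ := by
  have hs0 : 0 < s := lt_of_le_of_lt (Nat.cast_nonneg n) hs1
  rw [← lintegral_add_compl _ (measurableSet_ball (x := (0:EuclideanSpace ℝ (Fin n))) (ε := 1))]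
  have hmin0 : ∀ w : EuclideanSpace ℝ (Fin n), 0 ≤ min (c * ‖w‖) 1 :=
    fun w => le_min (by positivity) zero_le_one
  have hball : ∫⁻ w in ball (0:EuclideanSpace ℝ (Fin n)) 1,
      ENNReal.ofReal ((min (c * ‖w‖) 1) ^ 2 * ‖w‖ ^ (-s)) < ⊤ := by
    -- bound by c^2 * ‖w‖^(2-s)
    have hb1 : ∀ w : EuclideanSpace ℝ (Fin n), ENNReal.ofReal ((min (c * ‖w‖) 1) ^ 2 * ‖w‖ ^ (-s))
        ≤ ENNReal.ofReal (c ^ 2) * ENNReal.ofReal (‖w‖ ^ (2 - s)) := by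
      intro w
      rw [← ENNReal.ofReal_mul (by positivity)]
      apply ENNReal.ofReal_le_ofReal
      rcases eq_or_lt_of_le (norm_nonneg w) with h0 | h0
      · rw [← h0]
        rw [Real.zero_rpow (by linarith : -s ≠ 0), mul_zero]
        positivity
      · have h1 : (min (c * ‖w‖) 1) ^ 2 ≤ (c * ‖w‖) ^ 2 :=
          pow_le_pow_left₀ (hmin0 w) (min_le_left _ _) 2
        calc (min (c * ‖w‖) 1) ^ 2 * ‖w‖ ^ (-s) ≤ (c * ‖w‖) ^ 2 * ‖w‖ ^ (-s) :=
              mul_le_mul_of_nonneg_right h1 (Real.rpow_nonneg (norm_nonneg w) _)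
          _ = c ^ 2 * (‖w‖ ^ (2:ℝ) * ‖w‖ ^ (-s)) := by
              rw [mul_pow, Real.rpow_two]; ring
          _ = c ^ 2 * ‖w‖ ^ (2 - s) := by
              rw [← Real.rpow_add h0]; ring_nf
    refine lt_of_le_of_lt (lintegral_mono fun w => hb1 w) ?_
    rw [lintegral_const_mul' _ _ ENNReal.ofReal_ne_top]
    refine ENNReal.mul_lt_top ENNReal.ofReal_lt_top ?_
    -- ∫⁻ w in ball 0 1, ofReal (‖w‖ ^ (2 - s)) < ⊤
    set p : ℝ := 2 - s with hp
    rcases le_or_gt 0 p with hp0 | hp0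
    · -- bounded by 1 on the ball
      refine lt_of_le_of_lt (setLIntegral_mono' (g := fun _ => (1:ℝ≥0∞))
        measurableSet_ball (fun w hw => ?_)) ?_
      · exact ENNReal.ofReal_le_one.2
          (Real.rpow_le_one (norm_nonneg w) (le_of_lt (mem_ball_zero_iff.1 hw)) hp0)
      · rw [setLIntegral_const]
        exact ENNReal.mul_lt_top (by simp) measure_ball_lt_top
    · -- layer cake
      have hpne : p ≠ 0 := ne_of_lt hp0
      have hmeas : AEMeasurable (fun w : EuclideanSpace ℝ (Fin n) => ‖w‖ ^ p)
          (volume.restrict (ball (0:EuclideanSpace ℝ (Fin n)) 1)) := by fun_prop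
      rw [lintegral_eq_lintegral_meas_le _
        (Filter.Eventually.of_forall fun w => Real.rpow_nonneg (norm_nonneg w) p) hmeas]
      calc ∫⁻ t in Ioi (0:ℝ), volume.restrict (ball (0:EuclideanSpace ℝ (Fin n)) 1) {a : EuclideanSpace ℝ (Fin n) | t ≤ ‖a‖ ^ p}
          ≤ ∫⁻ t in Ioc (0:ℝ) 1 ∪ Ioi 1,
              volume.restrict (ball (0:EuclideanSpace ℝ (Fin n)) 1) {a : EuclideanSpace ℝ (Fin n) | t ≤ ‖a‖ ^ p} :=
            lintegral_mono_set Ioi_subset_Ioc_union_Ioi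
        _ ≤ (∫⁻ t in Ioc (0:ℝ) 1, volume.restrict (ball (0:EuclideanSpace ℝ (Fin n)) 1) {a : EuclideanSpace ℝ (Fin n) | t ≤ ‖a‖ ^ p})
            + ∫⁻ t in Ioi (1:ℝ), volume.restrict (ball (0:EuclideanSpace ℝ (Fin n)) 1) {a : EuclideanSpace ℝ (Fin n) | t ≤ ‖a‖ ^ p} :=
            lintegral_union_le _ _ _
        _ < ⊤ := by
            refine ENNReal.add_lt_top.2 ⟨?_, ?_⟩
            · refine lt_of_le_of_lt (lintegral_mono
                (g := fun _ => volume (ball (0:EuclideanSpace ℝ (Fin n)) 1))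
                fun t => ?_) ?_
              · exact (measure_mono (subset_univ _)).trans_eq (Measure.restrict_apply_univ _)
              · rw [setLIntegral_const]
                exact ENNReal.mul_lt_top measure_ball_lt_top (by simp)
            · have hq : p⁻¹ * n < -1 := by
                have h1 : (0:ℝ) < (n:ℝ) + p := by
                  have : (n:ℝ) + 2 - s > 0 := by linarith
                  simp only [hp]; linarith
                have h2 : p⁻¹ < 0 := inv_neg''.2 hp0
                have h3 : ((n:ℝ) + p) * p⁻¹ < 0 := mul_neg_of_pos_of_neg h1 h2
                have h4 : p * p⁻¹ = 1 := mul_inv_cancel₀ hpne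
                nlinarith
              have hbound : ∀ t ∈ Ioi (1:ℝ),
                  volume.restrict (ball (0:EuclideanSpace ℝ (Fin n)) 1) {a : EuclideanSpace ℝ (Fin n) | t ≤ ‖a‖ ^ p}
                  ≤ ENNReal.ofReal (t ^ (p⁻¹ * (n:ℝ))) * volume (ball (0:EuclideanSpace ℝ (Fin n)) 1) := by
                intro t ht
                have ht0 : (0:ℝ) < t := lt_trans one_pos ht
                have hsub : {a : EuclideanSpace ℝ (Fin n) | t ≤ ‖a‖ ^ p} ⊆ closedBall (0:EuclideanSpace ℝ (Fin n)) (t ^ p⁻¹) := by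
                  intro a ha
                  simp only [mem_setOf_eq] at ha
                  have ha0 : 0 < ‖a‖ := by
                    by_contra h
                    push_neg at h
                    have : ‖a‖ = 0 := le_antisymm h (norm_nonneg a)
                    rw [this, Real.zero_rpow hpne] at ha
                    linarith
                  rw [mem_closedBall_zero_iff]
                  calc ‖a‖ = (‖a‖ ^ p) ^ p⁻¹ := (Real.rpow_rpow_inv (norm_nonneg a) hpne).symm
                    _ ≤ t ^ p⁻¹ := Real.rpow_le_rpow_of_nonpos ht0 ha (le_of_lt (inv_neg''.2 hp0))
                calc volume.restrict (ball (0:EuclideanSpace ℝ (Fin n)) 1) {a : EuclideanSpace ℝ (Fin n) | t ≤ ‖a‖ ^ p}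
                    ≤ volume {a : EuclideanSpace ℝ (Fin n) | t ≤ ‖a‖ ^ p} := Measure.restrict_le_self _
                  _ ≤ volume (closedBall (0:EuclideanSpace ℝ (Fin n)) (t ^ p⁻¹)) := measure_mono hsub
                  _ = ENNReal.ofReal ((t ^ p⁻¹) ^ finrank ℝ (EuclideanSpace ℝ (Fin n))) * volume (ball (0:EuclideanSpace ℝ (Fin n)) 1) :=
                      Measure.addHaar_closedBall _ _ (Real.rpow_nonneg ht0.le _)
                  _ = ENNReal.ofReal (t ^ (p⁻¹ * (n:ℝ))) * volume (ball (0:EuclideanSpace ℝ (Fin n)) 1) := by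
                      congr 2
                      rw [← Real.rpow_natCast (t ^ p⁻¹) (finrank ℝ (EuclideanSpace ℝ (Fin n))), ← Real.rpow_mul ht0.le]
                      congr 1
                      · rw [finrank_euclideanSpace_fin]
              refine lt_of_le_of_lt (setLIntegral_mono' measurableSet_Ioi hbound) ?_
              rw [lintegral_mul_const' _ _ measure_ball_lt_top.ne]
              refine ENNReal.mul_lt_top ?_ measure_ball_lt_top
              have : p⁻¹ * (n:ℝ) < -1 := hq
              exact (integrableOn_Ioi_rpow_of_lt this one_pos).setLIntegral_lt_top
  have hcompl : ∫⁻ w in (ball (0:EuclideanSpace ℝ (Fin n)) 1)ᶜ,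
      ENNReal.ofReal ((min (c * ‖w‖) 1) ^ 2 * ‖w‖ ^ (-s)) < ⊤ := by
    have hb : ∀ w : EuclideanSpace ℝ (Fin n), w ∈ (ball (0:EuclideanSpace ℝ (Fin n)) 1)ᶜ →
        ENNReal.ofReal ((min (c * ‖w‖) 1) ^ 2 * ‖w‖ ^ (-s))
        ≤ ENNReal.ofReal ((2:ℝ) ^ s) * ENNReal.ofReal ((1 + ‖w‖) ^ (-s)) := by
      intro w hw
      have hw1 : (1:ℝ) ≤ ‖w‖ := by
        simpa [mem_ball_zero_iff] using hw
      rw [← ENNReal.ofReal_mul (by positivity)]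
      apply ENNReal.ofReal_le_ofReal
      have h1 : (min (c * ‖w‖) 1) ^ 2 ≤ 1 := by
        calc (min (c * ‖w‖) 1) ^ 2 ≤ 1 ^ 2 := pow_le_pow_left₀ (hmin0 w) (min_le_right _ _) 2
          _ = 1 := one_pow 2
      have h2 : ‖w‖ ^ (-s) ≤ 2 ^ s * (1 + ‖w‖) ^ (-s) := by
        have hw0 : (0:ℝ) < ‖w‖ := lt_of_lt_of_le one_pos hw1
        have h3 : ((1 + ‖w‖) / 2) ^ s ≤ ‖w‖ ^ s :=
          Real.rpow_le_rpow (by positivity) (by linarith) hs0.le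
        have h4 : (0:ℝ) < ((1 + ‖w‖) / 2) ^ s := Real.rpow_pos_of_pos (by positivity) s
        calc ‖w‖ ^ (-s) = (‖w‖ ^ s)⁻¹ := Real.rpow_neg hw0.le s
          _ ≤ (((1 + ‖w‖) / 2) ^ s)⁻¹ := by
              apply inv_anti₀ h4 h3
          _ = 2 ^ s * (1 + ‖w‖) ^ (-s) := by
              rw [Real.div_rpow (by positivity) (by norm_num), Real.rpow_neg (by positivity)]
              field_simp
      calc (min (c * ‖w‖) 1) ^ 2 * ‖w‖ ^ (-s) ≤ 1 * ‖w‖ ^ (-s) :=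
            mul_le_mul_of_nonneg_right h1 (Real.rpow_nonneg (norm_nonneg w) _)
        _ = ‖w‖ ^ (-s) := one_mul _
        _ ≤ 2 ^ s * (1 + ‖w‖) ^ (-s) := h2
    refine lt_of_le_of_lt (setLIntegral_mono' measurableSet_ball.compl hb) ?_
    rw [lintegral_const_mul' _ _ ENNReal.ofReal_ne_top]
    refine ENNReal.mul_lt_top ENNReal.ofReal_lt_top ?_
    refine lt_of_le_of_lt (setLIntegral_le_lintegral _ _) ?_
    have hns : (finrank ℝ (EuclideanSpace ℝ (Fin n)) : ℝ) < s := by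
      rw [finrank_euclideanSpace_fin]; exact hs1
    exact finite_integral_one_add_norm hns
  exact ENNReal.add_lt_top.2 ⟨hball, hcompl⟩


section Main

variable (n : ℕ) (α : ℝ)

-- the single-k bound, with G-based constant
lemma aux_main (n : ℕ) (α : ℝ) (hα : α ∈ Set.Ioo (0 : ℝ) 1)
    (ρ : ℝ → ℝ) (L₀ : ℝ≥0) (hlip : LipschitzWith L₀ ρ)
    (hρ01 : ∀ s : ℝ, ρ s ∈ Set.Icc (0 : ℝ) 1)
    {L₁ : ℝ}
    (hL₁ : (∫⁻ w : EuclideanSpace ℝ (Fin n),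
      ENNReal.ofReal ((min ((L₀:ℝ) * ‖w‖) 1) ^ 2 * ‖w‖ ^ (-((n:ℝ) + 2 * α))))
        ≤ ENNReal.ofReal L₁)
    (k : ℝ) (hk : 1 ≤ k) (y : EuclideanSpace ℝ (Fin n)) :
    ∫⁻ x, ENNReal.ofReal ((ρ (‖x‖ / k) - ρ (‖y‖ / k)) ^ 2 / ‖x - y‖ ^ ((n : ℝ) + 2 * α))
      ≤ ENNReal.ofReal (L₁ / k ^ (2 * α)) := by
  set s : ℝ := (n:ℝ) + 2 * α with hs
  have hk0 : (0:ℝ) < k := lt_of_lt_of_le one_pos hk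
  have hs0 : (0:ℝ) < s := by
    have := hα.1; positivity
  set G : EuclideanSpace ℝ (Fin n) → ℝ≥0∞ :=
    fun w => ENNReal.ofReal ((min ((L₀:ℝ) * ‖w‖) 1) ^ 2 * ‖w‖ ^ (-s)) with hG
  have hGmeas : Measurable G := by
    apply ENNReal.measurable_ofReal.comp
    fun_prop
  -- pointwise bound
  have hpt : ∀ x : EuclideanSpace ℝ (Fin n),
      ENNReal.ofReal ((ρ (‖x‖ / k) - ρ (‖y‖ / k)) ^ 2 / ‖x - y‖ ^ s)
        ≤ ENNReal.ofReal (k ^ (-s)) * G (k⁻¹ • (x - y)) := by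
    intro x
    set a : ℝ := ‖x - y‖ with ha
    have ha0 : 0 ≤ a := norm_nonneg _
    have hnorm : ‖k⁻¹ • (x - y)‖ = a / k := by
      rw [norm_smul, Real.norm_eq_abs, abs_inv, abs_of_pos hk0, inv_mul_eq_div]
    have hd : |ρ (‖x‖ / k) - ρ (‖y‖ / k)| ≤ min ((L₀:ℝ) * (a / k)) 1 := by
      refine le_min ?_ ?_
      · have h1 := hlip.dist_le_mul (‖x‖ / k) (‖y‖ / k)
        rw [Real.dist_eq, Real.dist_eq] at h1
        have h2 : |‖x‖ / k - ‖y‖ / k| ≤ a / k := by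
          rw [div_sub_div_same, abs_div, abs_of_pos hk0]
          gcongr
          exact abs_norm_sub_norm_le x y
        calc |ρ (‖x‖ / k) - ρ (‖y‖ / k)| ≤ (L₀:ℝ) * |‖x‖ / k - ‖y‖ / k| := h1
          _ ≤ (L₀:ℝ) * (a / k) := by
              exact mul_le_mul_of_nonneg_left h2 L₀.coe_nonneg
      · have h3 := hρ01 (‖x‖ / k)
        have h4 := hρ01 (‖y‖ / k)
        rw [abs_le]
        constructor <;> [linarith [h3.1, h3.2, h4.1, h4.2]; linarith [h3.1, h3.2, h4.1, h4.2]]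
    have hmin0 : 0 ≤ min ((L₀:ℝ) * (a / k)) 1 := le_trans (abs_nonneg _) hd
    have hsq : (ρ (‖x‖ / k) - ρ (‖y‖ / k)) ^ 2 ≤ (min ((L₀:ℝ) * (a / k)) 1) ^ 2 := by
      rw [← sq_abs]
      exact pow_le_pow_left₀ (abs_nonneg _) hd 2
    have hreal : (ρ (‖x‖ / k) - ρ (‖y‖ / k)) ^ 2 / a ^ s
        ≤ k ^ (-s) * ((min ((L₀:ℝ) * (a / k)) 1) ^ 2 * (a / k) ^ (-s)) := by
      have hrw : k ^ (-s) * ((min ((L₀:ℝ) * (a / k)) 1) ^ 2 * (a / k) ^ (-s))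
          = (min ((L₀:ℝ) * (a / k)) 1) ^ 2 * (a ^ s)⁻¹ := by
        rw [Real.div_rpow ha0 hk0.le, Real.rpow_neg ha0, Real.rpow_neg hk0.le]
        have hks : (0:ℝ) < k ^ s := Real.rpow_pos_of_pos hk0 s
        field_simp
      rw [hrw, div_eq_mul_inv]
      exact mul_le_mul_of_nonneg_right hsq (by positivity)
    calc ENNReal.ofReal ((ρ (‖x‖ / k) - ρ (‖y‖ / k)) ^ 2 / a ^ s)
        ≤ ENNReal.ofReal (k ^ (-s) * ((min ((L₀:ℝ) * (a / k)) 1) ^ 2 * (a / k) ^ (-s))) :=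
          ENNReal.ofReal_le_ofReal hreal
      _ = ENNReal.ofReal (k ^ (-s)) * G (k⁻¹ • (x - y)) := by
          rw [ENNReal.ofReal_mul (Real.rpow_nonneg hk0.le _)]
          congr 1
          simp [hG, hnorm]
  -- integrate
  calc ∫⁻ x, ENNReal.ofReal ((ρ (‖x‖ / k) - ρ (‖y‖ / k)) ^ 2 / ‖x - y‖ ^ s)
      ≤ ∫⁻ x, ENNReal.ofReal (k ^ (-s)) * G (k⁻¹ • (x - y)) := lintegral_mono hpt
    _ = ENNReal.ofReal (k ^ (-s)) * ∫⁻ x, G (k⁻¹ • (x - y)) :=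
        lintegral_const_mul' _ _ ENNReal.ofReal_ne_top
    _ = ENNReal.ofReal (k ^ (-s)) * ∫⁻ x, G (k⁻¹ • x) := by
        rw [lintegral_sub_right_eq_self (fun x => G (k⁻¹ • x)) y]
    _ = ENNReal.ofReal (k ^ (-s)) * (ENNReal.ofReal (k ^ n) * ∫⁻ w, G w) := by
        congr 1
        rw [← lintegral_map hGmeas (measurable_const_smul k⁻¹),
          Measure.map_addHaar_smul volume (inv_ne_zero hk0.ne'),
          lintegral_smul_measure]
        congr 2
        rw [finrank_euclideanSpace_fin, inv_pow]
        rw [inv_inv, abs_of_pos (pow_pos hk0 n)]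
    _ ≤ ENNReal.ofReal (k ^ (-s)) * (ENNReal.ofReal (k ^ n) * ENNReal.ofReal L₁) :=
        mul_le_mul_right (mul_le_mul_right hL₁ _) _
    _ = ENNReal.ofReal (L₁ / k ^ (2 * α)) := by
        rw [← ENNReal.ofReal_mul (by positivity : (0:ℝ) ≤ k ^ n),
          ← ENNReal.ofReal_mul (Real.rpow_nonneg hk0.le _)]
        congr 1
        rw [← mul_assoc, ← Real.rpow_natCast k n, ← Real.rpow_add hk0, hs]
        rw [show -((n:ℝ) + 2 * α) + (n:ℝ) = -(2 * α) by ring, Real.rpow_neg hk0.le,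
          div_eq_mul_inv]
        ring

end Main


/-- For a Lipschitz cutoff `ρ` (with `ρ = 0` on `(−∞,1/2]`, `ρ = 1` on
`[1,∞)`, `0 ≤ ρ ≤ 1`) there is `L₁ > 0`, depending only on `n, α, L₀`, with
`∫ (ρ(|x|/k) − ρ(|y|/k))²/|x−y|^{n+2α} dx ≤ L₁/k^{2α}` for every `k ≥ 1` and `y`;
consequently, if `α ∈ (1/2,1)`, `sup_y Σ_{k=1}^∞ ∫ (ρ(|x|/k) − ρ(|y|/k))²/|x−y|^{n+2α} dx < ∞`. -/
theorem stmt_10 (n : ℕ) (hn : 1 ≤ n) (α : ℝ) (hα : α ∈ Set.Ioo (0 : ℝ) 1)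
    (ρ : ℝ → ℝ) (L₀ : ℝ≥0) (hlip : LipschitzWith L₀ ρ)
    (hρ01 : ∀ s : ℝ, ρ s ∈ Set.Icc (0 : ℝ) 1)
    (hρ0 : ∀ s : ℝ, s ≤ 1 / 2 → ρ s = 0)
    (hρ1 : ∀ s : ℝ, 1 ≤ s → ρ s = 1) :
    ∃ L₁ : ℝ, 0 < L₁ ∧
      (∀ (k : ℝ), 1 ≤ k → ∀ y : EuclideanSpace ℝ (Fin n),
        ∫⁻ x, ENNReal.ofReal ((ρ (‖x‖ / k) - ρ (‖y‖ / k)) ^ 2 / ‖x - y‖ ^ ((n : ℝ) + 2 * α))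
          ≤ ENNReal.ofReal (L₁ / k ^ (2 * α))) ∧
      (α ∈ Set.Ioo (1 / 2 : ℝ) 1 →
        (⨆ y : EuclideanSpace ℝ (Fin n), ∑' k : ℕ+,
          ∫⁻ x, ENNReal.ofReal
            ((ρ (‖x‖ / (k : ℝ)) - ρ (‖y‖ / (k : ℝ))) ^ 2 / ‖x - y‖ ^ ((n : ℝ) + 2 * α)))
          < ⊤) := by
  have hs1 : (n:ℝ) < (n:ℝ) + 2 * α := by have := hα.1; linarith
  have hs2 : (n:ℝ) + 2 * α < (n:ℝ) + 2 := by have := hα.2; linarith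
  have hI := aux_I_lt_top n hs1 hs2 L₀.coe_nonneg
  set I := ∫⁻ w : EuclideanSpace ℝ (Fin n),
      ENNReal.ofReal ((min ((L₀:ℝ) * ‖w‖) 1) ^ 2 * ‖w‖ ^ (-((n:ℝ) + 2 * α))) with hIdef
  set L₁ : ℝ := I.toReal + 1 with hL₁def
  have hL₁0 : (0:ℝ) < L₁ := by positivity
  have hIle : I ≤ ENNReal.ofReal L₁ := by
    calc I = ENNReal.ofReal I.toReal := (ENNReal.ofReal_toReal hI.ne).symm
      _ ≤ ENNReal.ofReal L₁ := ENNReal.ofReal_le_ofReal (by simp [hL₁def])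
  have hmain := aux_main n α hα ρ L₀ hlip hρ01 hIle
  refine ⟨L₁, hL₁0, hmain, fun hα2 => ?_⟩
  have hsum : Summable (fun k : ℕ+ => L₁ / ((k:ℕ):ℝ) ^ (2 * α)) := by
    have h1 : Summable (fun m : ℕ => L₁ * ((m:ℝ) ^ (-(2 * α)))) :=
      (Real.summable_nat_rpow.2 (by have := hα2.1; linarith)).mul_left L₁
    have h2 := h1.comp_injective (fun a b h => PNat.coe_injective h :
      Function.Injective (fun k : ℕ+ => (k:ℕ)))
    refine h2.congr fun k => ?_
    simp only [Function.comp]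
    rw [Real.rpow_neg (Nat.cast_nonneg _), ← div_eq_mul_inv]
  refine lt_of_le_of_lt (iSup_le fun y => ENNReal.tsum_le_tsum fun k =>
    hmain (k:ℝ) (by exact_mod_cast k.one_le) y) ?_
  rw [← ENNReal.ofReal_tsum_of_nonneg
    (fun k => div_nonneg hL₁0.le (Real.rpow_nonneg (Nat.cast_nonneg _) _)) hsum]
  exact ENNReal.ofReal_lt_top
end

section
/- Let n ≥ 1 be an integer and α ∈ (0,1) with n > 2α, and let σ satisfy 0 < σ < 2α/(n − 2α). Then there exists a constant C > 0, depending only on n, α, σ, such that for every measurable u : ℝⁿ → ℂ with u ∈ L²(ℝⁿ) and finite Gagliardo seminorm [u]_α := (∫_{ℝⁿ}∫_{ℝⁿ} |u(x) − u(y)|²/|x − y|^{n+2α} dx dy)^{1/2}, one has u ∈ L^{2σ+2}(ℝⁿ) and ∫_{ℝⁿ} |u|^{2σ+2} dx ≤ C · [u]_α^{nσ/α} · ‖u‖_{L²}^{2σ+2 − nσ/α}. -/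
/-!
Write `d` for the dimension and `G(x) = ∫ |u x - u y|² / |x - y|^(d+2α) dy`, so that `∫ G` is the
squared Gagliardo seminorm `[u]²`. Splitting `u x = (u x - u y) + u y` and averaging over `y` in the
ball `B(x, r)`, Hölder on the ball gives, for every `q ≥ 2`,
`|u x|² ≲ r^(2α) G(x) + r^(-2d/q) ‖u‖_q²`.
Optimising in `r` and integrating in `x` yields `∫ |u|^(2 + 2αq/d) ≲ [u]² (∫ |u|^q)^(2α/d)`.
Starting from `q = 2`, the iteration `q ↦ 2 + 2αq/d` produces exponents increasing to the critical
exponent `2d/(d - 2α)`, each with the powers of `[u]` and `‖u‖₂` dictated by scaling; Hölder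
(log-convexity of `p ↦ ∫ |u|^p`) then interpolates to every exponent below the critical one.
-/

open MeasureTheory ENNReal Metric Module
open scoped NNReal

namespace ENNReal

theorem lintegral_rpow_le_of_convexComb {X : Type*} [MeasurableSpace X] {μ : Measure X}
    {f : X → ℝ≥0∞} (hf : AEMeasurable f μ) {p₀ p₁ p θ : ℝ} (hp₀ : 0 ≤ p₀) (hp₁ : 0 ≤ p₁)
    (hθ₀ : 0 ≤ θ) (hθ₁ : θ ≤ 1) (hp : p = (1 - θ) * p₀ + θ * p₁) :
    ∫⁻ x, f x ^ p ∂μ ≤ (∫⁻ x, f x ^ p₀ ∂μ) ^ (1 - θ) * (∫⁻ x, f x ^ p₁ ∂μ) ^ θ := by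
  have hpow : ∀ x, f x ^ p = (f x ^ p₀) ^ (1 - θ) * (f x ^ p₁) ^ θ := fun x => by
    rw [← rpow_mul, ← rpow_mul, ← rpow_add_of_nonneg _ _ (by nlinarith) (by positivity), hp]
    ring_nf
  simp_rw [hpow]
  exact lintegral_mul_norm_pow_le (hf.pow_const _) (hf.pow_const _) (by linarith) hθ₀
    (by ring)

theorem setLIntegral_sq_le {X : Type*} [MeasurableSpace X] {μ : Measure X} {f : X → ℝ≥0∞}
    (hf : AEMeasurable f μ) {q : ℝ} (hq : 2 ≤ q) (s : Set X) :
    ∫⁻ x in s, f x ^ 2 ∂μ ≤ (∫⁻ x, f x ^ q ∂μ) ^ (2 / q) * μ s ^ (1 - 2 / q) := by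
  have h := lintegral_rpow_le_of_convexComb (μ := μ.restrict s) hf.restrict le_rfl
    (by linarith) (by positivity) (div_le_one_of_le₀ hq (by linarith)) (p := 2)
    (by field_simp; ring)
  simp only [rpow_zero, lintegral_const, Measure.restrict_apply_univ, one_mul, rpow_ofNat] at h
  refine h.trans ?_
  rw [mul_comm]
  gcongr
  exact Measure.restrict_le_self

end ENNReal

theorem Real.nonpos_of_forall_le_rpow_neg_mul {γ X N : ℝ} (hγ : 0 < γ)
    (h : ∀ r : ℝ, 0 < r → X ≤ r ^ (-γ) * N) : X ≤ 0 := by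
  have hlim := (tendsto_rpow_neg_atTop hγ).mul_const N
  rw [zero_mul] at hlim
  exact ge_of_tendsto hlim <| (Filter.eventually_gt_atTop 0).mono h

theorem Real.rpow_le_of_forall_le_rpow_mul_add {β γ X G N : ℝ} (hβ : 0 < β) (hγ : 0 < γ)
    (hX : 0 ≤ X) (hG : 0 ≤ G) (hN : 0 ≤ N)
    (h : ∀ r : ℝ, 0 < r → X ≤ r ^ β * G + r ^ (-γ) * N) :
    X ^ ((β + γ) / γ) ≤ 2 ^ ((β + γ) / γ) * G * N ^ (β / γ) := by
  have ht : 0 < (β + γ) / γ := by positivity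
  rcases hG.eq_or_lt with rfl | hG
  · have hX0 := Real.nonpos_of_forall_le_rpow_neg_mul hγ fun r hr => by simpa using h r hr
    rw [le_antisymm hX0 hX, Real.zero_rpow ht.ne']
    simp
  rcases hN.eq_or_lt with rfl | hN
  · have hX0 := Real.nonpos_of_forall_le_rpow_neg_mul hβ fun r hr => by
      simpa [Real.inv_rpow hr.le, Real.rpow_neg hr.le] using h r⁻¹ (inv_pos.mpr hr)
    rw [le_antisymm hX0 hX, Real.zero_rpow ht.ne']
    positivity
  -- the radius at which the two terms balance
  set r := (N / G) ^ (β + γ)⁻¹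
  have hr0 : 0 < r := by positivity
  have hrβγ : r ^ (β + γ) = N / G := Real.rpow_inv_rpow (by positivity) (by positivity)
  have hXr : X ≤ 2 * (r ^ (-γ) * N) := by
    have hbalance : r ^ β * G = r ^ (-γ) * N := by
      rw [Real.rpow_neg hr0.le, ← div_eq_inv_mul, _root_.eq_div_iff (by positivity),
        mul_right_comm, ← Real.rpow_add hr0, hrβγ, div_mul_cancel₀ _ hG.ne']
    linarith [h r hr0]
  calc X ^ ((β + γ) / γ) ≤ (2 * (r ^ (-γ) * N)) ^ ((β + γ) / γ) := by gcongr
    _ = 2 ^ ((β + γ) / γ) * G * N ^ (β / γ) := by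
      rw [Real.mul_rpow (by norm_num) (by positivity), Real.mul_rpow (by positivity) hN.le,
        ← Real.rpow_mul hr0.le, show -γ * ((β + γ) / γ) = -(β + γ) by field_simp,
        Real.rpow_neg hr0.le, hrβγ,
        show (β + γ) / γ = 1 + β / γ by rw [one_add_div hγ.ne', add_comm],
        Real.rpow_add hN, Real.rpow_one]
      field_simp

theorem ENNReal.rpow_le_of_forall_le_rpow_mul_add {β γ : ℝ} (hβ : 0 < β) (hγ : 0 < γ)
    {X G N : ℝ≥0∞} (hG : G ≠ ∞) (hN : N ≠ ∞)
    (h : ∀ r : ℝ, 0 < r → X ≤ ENNReal.ofReal (r ^ β) * G + ENNReal.ofReal (r ^ (-γ)) * N) :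
    X ^ ((β + γ) / γ) ≤ 2 ^ ((β + γ) / γ) * G * N ^ (β / γ) := by
  have hX : X ≠ ∞ := ne_top_of_le_ne_top (by finiteness) (h 1 one_pos)
  have ht : 0 ≤ (β + γ) / γ := by positivity
  rw [← toReal_le_toReal (rpow_ne_top_of_nonneg ht hX) (by finiteness)]
  simp only [toReal_mul, ← toReal_rpow, toReal_ofNat]
  refine Real.rpow_le_of_forall_le_rpow_mul_add hβ hγ toReal_nonneg toReal_nonneg toReal_nonneg
    fun r hr => ?_
  have := toReal_mono (by finiteness) (h r hr)
  rwa [toReal_add (by finiteness) (by finiteness), toReal_mul, toReal_mul,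
    toReal_ofReal (by positivity), toReal_ofReal (by positivity)] at this

section

variable {E F : Type*} [NormedAddCommGroup E] [NormedAddCommGroup F]

theorem enorm_sq_le_two_mul_enorm_sub_sq_add (a b : F) :
    ‖a‖ₑ ^ 2 ≤ 2 * ‖a - b‖ₑ ^ 2 + 2 * ‖b‖ₑ ^ 2 := by
  have h := rpow_add_le_mul_rpow_add_rpow ‖a - b‖ₑ ‖b‖ₑ one_le_two
  norm_num [rpow_ofNat] at h
  rw [← mul_add]
  refine le_trans ?_ h
  gcongr
  simpa using enorm_add_le (a - b) b

theorem enorm_sub_sq_le_of_mem_ball (u : E → F) {x y : E} {r s : ℝ} (hs : 0 ≤ s)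
    (hy : y ∈ ball x r) :
    ‖u x - u y‖ₑ ^ 2
      ≤ ENNReal.ofReal (r ^ s) * (‖u x - u y‖ₑ ^ 2 / ENNReal.ofReal (‖x - y‖ ^ s)) := by
  rcases eq_or_ne x y with rfl | hxy
  · simp
  have hdist : 0 < ‖x - y‖ := norm_pos_iff.mpr (sub_ne_zero.mpr hxy)
  have hle : ‖x - y‖ ≤ r := by rw [← dist_eq_norm, dist_comm]; exact (mem_ball.mp hy).le
  calc ‖u x - u y‖ₑ ^ 2
      = ENNReal.ofReal (‖x - y‖ ^ s) * (‖u x - u y‖ₑ ^ 2 / ENNReal.ofReal (‖x - y‖ ^ s)) :=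
        (ENNReal.mul_div_cancel (by positivity) ofReal_ne_top).symm
    _ ≤ ENNReal.ofReal (r ^ s) * (‖u x - u y‖ₑ ^ 2 / ENNReal.ofReal (‖x - y‖ ^ s)) := by
        gcongr

end

noncomputable def bootstrapExponent (d α : ℝ) : ℕ → ℝ
  | 0 => 2
  | k + 1 => 2 + 2 * α * bootstrapExponent d α k / d

theorem two_le_bootstrapExponent {d α : ℝ} (hd : 0 ≤ d) (hα : 0 ≤ α) (k : ℕ) :
    2 ≤ bootstrapExponent d α k := by
  induction k with
  | zero => exact le_rfl
  | succ k ih =>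
    have : 0 ≤ 2 * α * bootstrapExponent d α k / d := by positivity
    rw [bootstrapExponent]
    linarith

theorem sobolevExponent_sub_bootstrapExponent {d α : ℝ} (hd : 0 < d) (hαd : 2 * α < d) (k : ℕ) :
    2 * d / (d - 2 * α) - bootstrapExponent d α k
      = (2 * α / d) ^ k * (2 * d / (d - 2 * α) - 2) := by
  have : d - 2 * α ≠ 0 := by linarith
  induction k with
  | zero => simp [bootstrapExponent]
  | succ k ih =>
    rw [bootstrapExponent, pow_succ', mul_assoc (2 * α / d), ← ih]
    field_simp
    ring

theorem exists_lt_bootstrapExponent {d α s : ℝ} (hd : 0 < d) (hα : 0 ≤ α) (hαd : 2 * α < d)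
    (hs : s < 2 * d / (d - 2 * α)) : ∃ k, s < bootstrapExponent d α k := by
  have hlim : Filter.Tendsto (bootstrapExponent d α) Filter.atTop (nhds (2 * d / (d - 2 * α))) := by
    have h := ((tendsto_pow_atTop_nhds_zero_of_lt_one (by positivity)
      ((div_lt_one hd).mpr hαd)).mul_const (2 * d / (d - 2 * α) - 2)).const_sub
      (2 * d / (d - 2 * α))
    simp only [zero_mul, sub_zero] at h
    refine h.congr fun k => ?_
    rw [← sobolevExponent_sub_bootstrapExponent hd hαd k]
    ring
  exact (hlim.eventually (lt_mem_nhds hs)).exists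

theorem mul_bootstrapExponent_sub_two_le {d α : ℝ} (hd : 0 < d) (hα : 0 ≤ α)
    (hαd : 2 * α < d) (k : ℕ) :
    d * (bootstrapExponent d α k - 2) ≤ 2 * α * bootstrapExponent d α k := by
  have hden : 0 < d - 2 * α := by linarith
  have hcrit : 2 ≤ 2 * d / (d - 2 * α) := by
    rw [le_div_iff₀ hden]
    linarith
  have hle : bootstrapExponent d α k ≤ 2 * d / (d - 2 * α) := by
    have : 0 ≤ (2 * α / d) ^ k * (2 * d / (d - 2 * α) - 2) :=
      mul_nonneg (by positivity) (by linarith)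
    linarith [sobolevExponent_sub_bootstrapExponent hd hαd k]
  rw [le_div_iff₀ hden] at hle
  linarith

section

variable {E F : Type*} [NormedAddCommGroup E] [NormedSpace ℝ E] [MeasurableSpace E]
  [NormedAddCommGroup F] (μ : Measure E)

noncomputable def gagliardoDensity (α : ℝ) (u : E → F) (x : E) : ℝ≥0∞ :=
  ∫⁻ y, ‖u x - u y‖ₑ ^ 2 / ENNReal.ofReal (‖x - y‖ ^ ((finrank ℝ E : ℝ) + 2 * α)) ∂μ

noncomputable def gagliardoEnergy (α : ℝ) (u : E → F) : ℝ≥0∞ :=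
  ∫⁻ x, gagliardoDensity μ α u x ∂μ

theorem setLIntegral_ball_enorm_sub_sq_le [OpensMeasurableSpace E] {α : ℝ} (hα : 0 ≤ α)
    (u : E → F) (x : E) (r : ℝ) :
    ∫⁻ y in ball x r, ‖u x - u y‖ₑ ^ 2 ∂μ
      ≤ ENNReal.ofReal (r ^ ((finrank ℝ E : ℝ) + 2 * α)) * gagliardoDensity μ α u x := by
  have hs : (0 : ℝ) ≤ finrank ℝ E + 2 * α := by positivity
  calc ∫⁻ y in ball x r, ‖u x - u y‖ₑ ^ 2 ∂μ
      ≤ ∫⁻ y in ball x r, ENNReal.ofReal (r ^ ((finrank ℝ E : ℝ) + 2 * α))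
          * (‖u x - u y‖ₑ ^ 2 / ENNReal.ofReal (‖x - y‖ ^ ((finrank ℝ E : ℝ) + 2 * α))) ∂μ :=
        setLIntegral_mono_ae' measurableSet_ball
          (ae_of_all _ fun y hy => enorm_sub_sq_le_of_mem_ball u hs hy)
    _ ≤ _ := by
        rw [lintegral_const_mul' _ _ ofReal_ne_top]
        gcongr
        exact setLIntegral_le_lintegral _ _

variable [MeasurableSpace F]

-- `∫ |u|^p ≤ K [u]^(2a) ‖u‖₂^(p - 2a)` with `a = d (p - 2) / (4α)`: the exponents forced by scaling
variable (F) in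
def HasGagliardoNirenbergBound (α p : ℝ) : Prop :=
  ∃ K : ℝ≥0, ∀ u : E → F, Measurable u → gagliardoEnergy μ α u ≠ ∞ →
    ∫⁻ x, ‖u x‖ₑ ^ (2 : ℝ) ∂μ ≠ ∞ →
    ∫⁻ x, ‖u x‖ₑ ^ p ∂μ
      ≤ K * gagliardoEnergy μ α u ^ (finrank ℝ E * (p - 2) / (4 * α))
        * (∫⁻ x, ‖u x‖ₑ ^ (2 : ℝ) ∂μ) ^ (p / 2 - finrank ℝ E * (p - 2) / (4 * α))

theorem hasGagliardoNirenbergBound_two (α : ℝ) : HasGagliardoNirenbergBound F μ α 2 :=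
  ⟨1, fun u _ _ _ => by simp⟩

namespace HasGagliardoNirenbergBound

variable {μ}

theorem exists_lintegral_le_ofReal {α s : ℝ}
    (h : HasGagliardoNirenbergBound F μ α s) (hα : 0 < α) (hs : 2 ≤ s)
    (hsc : finrank ℝ E * (s - 2) ≤ 2 * α * s) :
    ∃ C : ℝ, 0 < C ∧ ∀ u : E → F, Measurable u → MemLp u 2 μ → gagliardoEnergy μ α u < ∞ →
      ∫⁻ x, ‖u x‖ₑ ^ s ∂μ
        ≤ ENNReal.ofReal (C * ((gagliardoEnergy μ α u).toReal ^ (1 / 2 : ℝ))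
            ^ (finrank ℝ E * (s - 2) / (2 * α))
          * (eLpNorm u 2 μ).toReal ^ (s - finrank ℝ E * (s - 2) / (2 * α))) := by
  obtain ⟨K, hK⟩ := h
  have ha : 0 ≤ finrank ℝ E * (s - 2) / (4 * α) := by
    have : 0 ≤ s - 2 := by linarith
    positivity
  have hb : 0 ≤ s / 2 - finrank ℝ E * (s - 2) / (4 * α) := by
    rw [sub_nonneg, div_le_div_iff₀ (by positivity) (by positivity)]
    nlinarith
  refine ⟨(K + 1 : ℝ≥0), by positivity, fun u hu hL2 hD => ?_⟩
  have hnorm : eLpNorm u 2 μ = (∫⁻ x, ‖u x‖ₑ ^ (2 : ℝ) ∂μ) ^ (1 / 2 : ℝ) := by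
    simp [eLpNorm_eq_lintegral_rpow_enorm_toReal two_ne_zero ofNat_ne_top]
  have hI : ∫⁻ x, ‖u x‖ₑ ^ (2 : ℝ) ∂μ ≠ ∞ := by
    simpa using (lintegral_rpow_enorm_lt_top_of_eLpNorm_lt_top two_ne_zero ofNat_ne_top
      hL2.eLpNorm_lt_top).ne
  calc ∫⁻ x, ‖u x‖ₑ ^ s ∂μ
      ≤ K * gagliardoEnergy μ α u ^ (finrank ℝ E * (s - 2) / (4 * α))
          * (∫⁻ x, ‖u x‖ₑ ^ (2 : ℝ) ∂μ) ^ (s / 2 - finrank ℝ E * (s - 2) / (4 * α)) :=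
        hK u hu hD.ne hI
    _ ≤ ↑(K + 1) * gagliardoEnergy μ α u ^ (finrank ℝ E * (s - 2) / (4 * α))
          * (∫⁻ x, ‖u x‖ₑ ^ (2 : ℝ) ∂μ) ^ (s / 2 - finrank ℝ E * (s - 2) / (4 * α)) := by
        gcongr
        exact le_self_add
    _ = _ := by
        rw [← Real.rpow_mul toReal_nonneg, toReal_rpow, hnorm, toReal_rpow, ← rpow_mul,
          show 1 / 2 * (finrank ℝ E * (s - 2) / (2 * α)) = finrank ℝ E * (s - 2) / (4 * α) by ring,
          show 1 / 2 * (s - finrank ℝ E * (s - 2) / (2 * α))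
            = s / 2 - finrank ℝ E * (s - 2) / (4 * α) by ring,
          ofReal_mul (by positivity), ofReal_mul (by positivity), ofReal_coe_nnreal,
          ofReal_toReal (rpow_ne_top_of_nonneg ha hD.ne),
          ofReal_toReal (rpow_ne_top_of_nonneg hb hI)]

variable [OpensMeasurableSpace F]

theorem of_lt {α p s : ℝ} (h : HasGagliardoNirenbergBound F μ α p) (hα : 0 < α)
    (hpc : finrank ℝ E * (p - 2) ≤ 2 * α * p) (hs : 2 ≤ s) (hsp : s < p) :
    HasGagliardoNirenbergBound F μ α s := by
  obtain ⟨K, hK⟩ := h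
  have hp : p - 2 ≠ 0 := by linarith
  set θ := (s - 2) / (p - 2) with hθ
  have hθ₀ : 0 ≤ θ := div_nonneg (by linarith) (by linarith)
  have hθ₁ : θ ≤ 1 := (div_le_one (by linarith)).mpr (by linarith)
  have ha : 0 ≤ finrank ℝ E * (p - 2) / (4 * α) := by
    have : 0 ≤ p - 2 := by linarith
    positivity
  have hb : 0 ≤ p / 2 - finrank ℝ E * (p - 2) / (4 * α) := by
    rw [sub_nonneg, div_le_div_iff₀ (by positivity) (by positivity)]
    nlinarith
  refine ⟨K ^ θ, fun u hu hD hI => ?_⟩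
  calc ∫⁻ x, ‖u x‖ₑ ^ s ∂μ
      ≤ (∫⁻ x, ‖u x‖ₑ ^ (2 : ℝ) ∂μ) ^ (1 - θ) * (∫⁻ x, ‖u x‖ₑ ^ p ∂μ) ^ θ :=
        lintegral_rpow_le_of_convexComb hu.enorm.aemeasurable zero_le_two (by linarith) hθ₀ hθ₁
          (by rw [hθ]; field_simp; ring)
    _ ≤ (∫⁻ x, ‖u x‖ₑ ^ (2 : ℝ) ∂μ) ^ (1 - θ)
          * (K * gagliardoEnergy μ α u ^ (finrank ℝ E * (p - 2) / (4 * α))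
            * (∫⁻ x, ‖u x‖ₑ ^ (2 : ℝ) ∂μ) ^ (p / 2 - finrank ℝ E * (p - 2) / (4 * α))) ^ θ := by
        gcongr
        exact hK u hu hD hI
    _ = ↑(K ^ θ) * gagliardoEnergy μ α u ^ (finrank ℝ E * (s - 2) / (4 * α))
          * (∫⁻ x, ‖u x‖ₑ ^ (2 : ℝ) ∂μ) ^ (s / 2 - finrank ℝ E * (s - 2) / (4 * α)) := by
        rw [coe_rpow_of_nonneg _ hθ₀, mul_rpow_of_nonneg _ _ hθ₀, mul_rpow_of_nonneg _ _ hθ₀,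
          ← rpow_mul, ← rpow_mul,
          show s / 2 - finrank ℝ E * (s - 2) / (4 * α)
            = (1 - θ) + (p / 2 - finrank ℝ E * (p - 2) / (4 * α)) * θ by
              rw [hθ]; field_simp; ring,
          rpow_add_of_nonneg _ _ (by linarith) (mul_nonneg hb hθ₀),
          show finrank ℝ E * (p - 2) / (4 * α) * θ = finrank ℝ E * (s - 2) / (4 * α) by
              rw [hθ]; field_simp]
        ring

end HasGagliardoNirenbergBound

variable [BorelSpace E] [OpensMeasurableSpace F]

theorem enorm_sq_mul_measure_ball_le {α q : ℝ} (hα : 0 ≤ α) {u : E → F} (hu : Measurable u)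
    (hq : 2 ≤ q) (x : E) (r : ℝ) :
    ‖u x‖ₑ ^ 2 * μ (ball x r)
      ≤ 2 * (ENNReal.ofReal (r ^ ((finrank ℝ E : ℝ) + 2 * α)) * gagliardoDensity μ α u x)
        + 2 * ((∫⁻ y, ‖u y‖ₑ ^ q ∂μ) ^ (2 / q) * μ (ball x r) ^ (1 - 2 / q)) := by
  calc ‖u x‖ₑ ^ 2 * μ (ball x r) = ∫⁻ y in ball x r, ‖u x‖ₑ ^ 2 ∂μ :=
        (setLIntegral_const _ _).symm
    _ ≤ ∫⁻ y in ball x r, 2 * ‖u x - u y‖ₑ ^ 2 + 2 * ‖u y‖ₑ ^ 2 ∂μ :=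
        lintegral_mono fun y => enorm_sq_le_two_mul_enorm_sub_sq_add (u x) (u y)
    _ = 2 * ∫⁻ y in ball x r, ‖u x - u y‖ₑ ^ 2 ∂μ + 2 * ∫⁻ y in ball x r, ‖u y‖ₑ ^ 2 ∂μ := by
        rw [lintegral_add_right _ ((hu.enorm.pow_const 2).const_mul 2),
          lintegral_const_mul' _ _ ofNat_ne_top, lintegral_const_mul' _ _ ofNat_ne_top]
    _ ≤ _ := by
        gcongr
        exacts [setLIntegral_ball_enorm_sub_sq_le μ hα u x r,
          setLIntegral_sq_le hu.enorm.aemeasurable hq _]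

variable [FiniteDimensional ℝ E]

theorem measurable_gagliardoDensity [SecondCountableTopology F] [SFinite μ] (α : ℝ) {u : E → F}
    (hu : Measurable u) :
    Measurable (gagliardoDensity μ α u) := by
  refine Measurable.lintegral_prod_right' (ν := μ) (f := fun p : E × E =>
    ‖u p.1 - u p.2‖ₑ ^ 2 / ENNReal.ofReal (‖p.1 - p.2‖ ^ ((finrank ℝ E : ℝ) + 2 * α))) ?_
  fun_prop

variable [μ.IsAddHaarMeasure]

theorem addHaar_ball_rpow_of_pos {x : E} {r : ℝ} (hr : 0 < r) (s : ℝ) :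
    μ (ball x r) ^ s = ENNReal.ofReal (r ^ ((finrank ℝ E : ℝ) * s)) * μ (ball 0 1) ^ s := by
  rw [Measure.addHaar_ball_of_pos μ x hr, mul_rpow_of_ne_top ofReal_ne_top measure_ball_lt_top.ne,
    ofReal_rpow_of_pos (by positivity), ← Real.rpow_natCast, ← Real.rpow_mul hr.le]

theorem enorm_sq_le_rpow_mul_gagliardoDensity_add {α q : ℝ} (hα : 0 ≤ α) {u : E → F}
    (hu : Measurable u) (hq : 2 ≤ q) (x : E) {r : ℝ} (hr : 0 < r) :
    ‖u x‖ₑ ^ 2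
      ≤ ENNReal.ofReal (r ^ (2 * α)) * (2 * (μ (ball 0 1))⁻¹ * gagliardoDensity μ α u x)
        + ENNReal.ofReal (r ^ (-(2 * finrank ℝ E / q)))
          * (2 * μ (ball 0 1) ^ (-(2 / q)) * (∫⁻ y, ‖u y‖ₑ ^ q ∂μ) ^ (2 / q)) := by
  have hV0 : μ (ball 0 1) ≠ 0 := (measure_ball_pos μ 0 one_pos).ne'
  have hVtop : μ (ball 0 1) ≠ ∞ := measure_ball_lt_top.ne
  have hB0 : μ (ball x r) ≠ 0 := (measure_ball_pos μ x hr).ne'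
  have hBtop : μ (ball x r) ≠ ∞ := measure_ball_lt_top.ne
  rw [← ENNReal.mul_le_mul_iff_left hB0 hBtop]
  refine (enorm_sq_mul_measure_ball_le μ hα hu hq x r).trans_eq ?_
  have hterm₁ : ENNReal.ofReal (r ^ (2 * α)) * (2 * (μ (ball 0 1))⁻¹ * gagliardoDensity μ α u x)
        * μ (ball x r)
      = 2 * (ENNReal.ofReal (r ^ ((finrank ℝ E : ℝ) + 2 * α)) * gagliardoDensity μ α u x) := by
    rw [Measure.addHaar_ball_of_pos μ x hr, Real.rpow_add hr, Real.rpow_natCast, mul_comm,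
      ofReal_mul (by positivity)]
    calc _ = 2 * (ENNReal.ofReal (r ^ finrank ℝ E) * ENNReal.ofReal (r ^ (2 * α))
            * gagliardoDensity μ α u x) * ((μ (ball 0 1))⁻¹ * μ (ball 0 1)) := by ring
      _ = _ := by rw [ENNReal.inv_mul_cancel hV0 hVtop, mul_one]
  have hterm₂ : ENNReal.ofReal (r ^ (-(2 * finrank ℝ E / q)))
        * (2 * μ (ball 0 1) ^ (-(2 / q)) * (∫⁻ y, ‖u y‖ₑ ^ q ∂μ) ^ (2 / q)) * μ (ball x r)
      = 2 * ((∫⁻ y, ‖u y‖ₑ ^ q ∂μ) ^ (2 / q) * μ (ball x r) ^ (1 - 2 / q)) := by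
    rw [sub_eq_add_neg, rpow_add _ _ hB0 hBtop, rpow_one, addHaar_ball_rpow_of_pos μ hr,
      show (finrank ℝ E : ℝ) * -(2 / q) = -(2 * finrank ℝ E / q) by ring]
    ring
  rw [add_mul, hterm₁, hterm₂]

theorem exists_enorm_rpow_le_mul_gagliardoDensity [Nontrivial E] {α q : ℝ} (hα : 0 < α)
    (hq : 2 ≤ q) :
    ∃ K : ℝ≥0, ∀ u : E → F, Measurable u → ∀ x, gagliardoDensity μ α u x ≠ ∞ →
      ∫⁻ y, ‖u y‖ₑ ^ q ∂μ ≠ ∞ →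
      ‖u x‖ₑ ^ (2 + 2 * α * q / finrank ℝ E)
        ≤ K * (∫⁻ y, ‖u y‖ₑ ^ q ∂μ) ^ (2 * α / finrank ℝ E) * gagliardoDensity μ α u x := by
  set d : ℝ := (finrank ℝ E : ℝ)
  have hd : 0 < d := Nat.cast_pos.mpr finrank_pos
  have hq0 : 0 < q := by linarith
  set V := μ (ball 0 1)
  have hV0 : V ≠ 0 := (measure_ball_pos μ 0 one_pos).ne'
  have hVtop : V ≠ ∞ := measure_ball_lt_top.ne
  have hVq : V ^ (-(2 / q)) ≠ ∞ := rpow_ne_top_of_ne_zero hV0 hVtop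
  set t := α * q / d with ht
  set K : ℝ≥0∞ := 2 ^ (t + 1) * (2 * V⁻¹) * (2 * V ^ (-(2 / q))) ^ t
  have hK : K ≠ ∞ := by
    have : 0 ≤ t := by positivity
    finiteness
  refine ⟨K.toNNReal, fun u hu x hGx hI => ?_⟩
  set G := gagliardoDensity μ α u x
  set I := ∫⁻ y, ‖u y‖ₑ ^ q ∂μ
  have hopt := rpow_le_of_forall_le_rpow_mul_add (by positivity) (by positivity)
    (by finiteness) (by finiteness)
    fun r hr => enorm_sq_le_rpow_mul_gagliardoDensity_add μ hα.le hu hq x hr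
  rw [show (2 * α + 2 * d / q) / (2 * d / q) = t + 1 by rw [ht]; field_simp,
    show 2 * α / (2 * d / q) = t by rw [ht]; field_simp] at hopt
  calc ‖u x‖ₑ ^ (2 + 2 * α * q / d) = (‖u x‖ₑ ^ 2) ^ (t + 1) := by
        rw [← rpow_ofNat, ← rpow_mul]
        congr 1
        rw [ht]
        ring
    _ ≤ 2 ^ (t + 1) * (2 * V⁻¹ * G) * (2 * V ^ (-(2 / q)) * I ^ (2 / q)) ^ t := hopt
    _ = K.toNNReal * I ^ (2 * α / d) * G := by
        rw [coe_toNNReal hK, mul_rpow_of_nonneg _ _ (by positivity), ← rpow_mul,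
          show 2 / q * t = 2 * α / d by rw [ht]; field_simp]
        ring

theorem exists_lintegral_rpow_le_mul_gagliardoEnergy [Nontrivial E] [SecondCountableTopology F]
    {α q : ℝ}
    (hα : 0 < α) (hq : 2 ≤ q) :
    ∃ K : ℝ≥0, ∀ u : E → F, Measurable u → gagliardoEnergy μ α u ≠ ∞ →
      ∫⁻ x, ‖u x‖ₑ ^ q ∂μ ≠ ∞ →
      ∫⁻ x, ‖u x‖ₑ ^ (2 + 2 * α * q / finrank ℝ E) ∂μ
        ≤ K * (∫⁻ x, ‖u x‖ₑ ^ q ∂μ) ^ (2 * α / finrank ℝ E) * gagliardoEnergy μ α u := by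
  obtain ⟨K, hK⟩ := exists_enorm_rpow_le_mul_gagliardoDensity (F := F) μ hα hq
  refine ⟨K, fun u hu hD hI => ?_⟩
  calc ∫⁻ x, ‖u x‖ₑ ^ (2 + 2 * α * q / finrank ℝ E) ∂μ
      ≤ ∫⁻ x, K * (∫⁻ x, ‖u x‖ₑ ^ q ∂μ) ^ (2 * α / finrank ℝ E) * gagliardoDensity μ α u x ∂μ := by
        refine lintegral_mono_ae ?_
        filter_upwards [ae_lt_top (measurable_gagliardoDensity μ α hu) hD] with x hx
        exact hK u hu x hx.ne hI
    _ = _ :=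
        lintegral_const_mul' _ _ (mul_ne_top coe_ne_top (rpow_ne_top_of_nonneg (by positivity) hI))

variable {μ} in
theorem HasGagliardoNirenbergBound.bootstrap [Nontrivial E] [SecondCountableTopology F] {α p : ℝ}
    (h : HasGagliardoNirenbergBound F μ α p)
    (hα : 0 < α) (hp : 2 ≤ p) (hpc : finrank ℝ E * (p - 2) ≤ 2 * α * p) :
    HasGagliardoNirenbergBound F μ α (2 + 2 * α * p / finrank ℝ E) := by
  obtain ⟨K, hK⟩ := h
  obtain ⟨L, hL⟩ := exists_lintegral_rpow_le_mul_gagliardoEnergy (F := F) μ hα hp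
  have hd : (0 : ℝ) < finrank ℝ E := Nat.cast_pos.mpr finrank_pos
  set c := 2 * α / finrank ℝ E with hc
  have hc₀ : 0 ≤ c := by positivity
  have ha : 0 ≤ finrank ℝ E * (p - 2) / (4 * α) := by
    have : 0 ≤ p - 2 := by linarith
    positivity
  have hb : 0 ≤ p / 2 - finrank ℝ E * (p - 2) / (4 * α) := by
    rw [sub_nonneg, div_le_div_iff₀ (by positivity) (by positivity)]
    nlinarith
  refine ⟨L * K ^ c, fun u hu hD hI => ?_⟩
  have hIp := hK u hu hD hI
  have hIp_ne_top : ∫⁻ x, ‖u x‖ₑ ^ p ∂μ ≠ ∞ := ne_top_of_le_ne_top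
    (mul_ne_top (mul_ne_top coe_ne_top (rpow_ne_top_of_nonneg ha hD))
      (rpow_ne_top_of_nonneg hb hI)) hIp
  calc ∫⁻ x, ‖u x‖ₑ ^ (2 + 2 * α * p / finrank ℝ E) ∂μ
      ≤ L * (∫⁻ x, ‖u x‖ₑ ^ p ∂μ) ^ c * gagliardoEnergy μ α u := hL u hu hD hIp_ne_top
    _ ≤ L * (K * gagliardoEnergy μ α u ^ (finrank ℝ E * (p - 2) / (4 * α))
          * (∫⁻ x, ‖u x‖ₑ ^ (2 : ℝ) ∂μ) ^ (p / 2 - finrank ℝ E * (p - 2) / (4 * α))) ^ c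
          * gagliardoEnergy μ α u := by
        gcongr
    _ = ↑(L * K ^ c) * gagliardoEnergy μ α u
            ^ (finrank ℝ E * (2 + 2 * α * p / finrank ℝ E - 2) / (4 * α))
          * (∫⁻ x, ‖u x‖ₑ ^ (2 : ℝ) ∂μ) ^ ((2 + 2 * α * p / finrank ℝ E) / 2
            - finrank ℝ E * (2 + 2 * α * p / finrank ℝ E - 2) / (4 * α)) := by
        rw [coe_mul, coe_rpow_of_nonneg _ hc₀, mul_rpow_of_nonneg _ _ hc₀,
          mul_rpow_of_nonneg _ _ hc₀, ← rpow_mul, ← rpow_mul,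
          show finrank ℝ E * (2 + 2 * α * p / finrank ℝ E - 2) / (4 * α)
            = finrank ℝ E * (p - 2) / (4 * α) * c + 1 by rw [hc]; field_simp; ring,
          rpow_add_of_nonneg _ _ (mul_nonneg ha hc₀) zero_le_one, rpow_one,
          show (2 + 2 * α * p / finrank ℝ E) / 2
              - (finrank ℝ E * (p - 2) / (4 * α) * c + 1)
            = (p / 2 - finrank ℝ E * (p - 2) / (4 * α)) * c by rw [hc]; field_simp; ring]
        ring

theorem hasGagliardoNirenbergBound_bootstrapExponent [SecondCountableTopology F] {α : ℝ}
    (hα : 0 < α) (hαd : 2 * α < finrank ℝ E) (k : ℕ) :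
    HasGagliardoNirenbergBound F μ α (bootstrapExponent (finrank ℝ E) α k) := by
  have hd : (0 : ℝ) < finrank ℝ E := by linarith
  have : Nontrivial E := Module.nontrivial_of_finrank_pos (by exact_mod_cast hd)
  induction k with
  | zero => exact hasGagliardoNirenbergBound_two μ α
  | succ k ih =>
    exact ih.bootstrap hα (two_le_bootstrapExponent hd.le hα.le k)
      (mul_bootstrapExponent_sub_two_le hd hα.le hαd k)

theorem HasGagliardoNirenbergBound.of_lt_sobolevExponent [SecondCountableTopology F] {α s : ℝ}
    (hα : 0 < α) (hαd : 2 * α < finrank ℝ E) (hs : 2 ≤ s)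
    (hsc : s < 2 * finrank ℝ E / (finrank ℝ E - 2 * α)) :
    HasGagliardoNirenbergBound F μ α s := by
  have hd : (0 : ℝ) < finrank ℝ E := by linarith
  obtain ⟨k, hk⟩ := exists_lt_bootstrapExponent hd hα.le hαd hsc
  exact (hasGagliardoNirenbergBound_bootstrapExponent μ hα hαd k).of_lt hα
    (mul_bootstrapExponent_sub_two_le hd hα.le hαd k) hs hk

end

theorem stmt_14_general (n : ℕ) (α σ : ℝ) (hα : α ∈ Set.Ioo (0 : ℝ) 1)
    (h2α : 2 * α < n) (hσ₁ : 0 < σ) (hσ₂ : σ < 2 * α / ((n : ℝ) - 2 * α)) :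
    ∃ C : ℝ, 0 < C ∧ ∀ u : EuclideanSpace ℝ (Fin n) → ℂ, Measurable u →
      MemLp u 2 (volume : Measure (EuclideanSpace ℝ (Fin n))) →
      (∫⁻ x, ∫⁻ y, (‖u x - u y‖₊ : ℝ≥0∞) ^ 2
          / ENNReal.ofReal (‖x - y‖ ^ ((n : ℝ) + 2 * α))) < ⊤ →
      ∫⁻ x, (‖u x‖₊ : ℝ≥0∞) ^ (2 * σ + 2)
        ≤ ENNReal.ofReal (C
          * ((∫⁻ x, ∫⁻ y, (‖u x - u y‖₊ : ℝ≥0∞) ^ 2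
              / ENNReal.ofReal (‖x - y‖ ^ ((n : ℝ) + 2 * α))).toReal ^ (1 / 2 : ℝ))
              ^ ((n : ℝ) * σ / α)
          * ((eLpNorm u 2 (volume : Measure (EuclideanSpace ℝ (Fin n)))).toReal)
              ^ (2 * σ + 2 - (n : ℝ) * σ / α)) := by
  have hd : (finrank ℝ (EuclideanSpace ℝ (Fin n)) : ℝ) = n := by simp
  have hσ : σ * (n - 2 * α) < 2 * α := (lt_div_iff₀ (by linarith)).mp hσ₂
  have hσc : 2 * σ + 2 < 2 * n / (n - 2 * α) := by
    rw [lt_div_iff₀ (by linarith)]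
    linarith
  have hs : 2 ≤ 2 * σ + 2 := by linarith
  obtain ⟨C, hC, hbound⟩ :=
    (HasGagliardoNirenbergBound.of_lt_sobolevExponent (F := ℂ) volume hα.1 (hd ▸ h2α) hs
      (hd ▸ hσc)).exists_lintegral_le_ofReal hα.1 hs (by rw [hd]; linarith)
  rw [hd, show (n : ℝ) * (2 * σ + 2 - 2) / (2 * α) = n * σ / α by field_simp; ring] at hbound
  simp only [gagliardoEnergy, gagliardoDensity, hd, enorm_eq_nnnorm] at hbound
  exact ⟨C, hC, hbound⟩

/-- Fractional Gagliardo–Nirenberg inequality: for `n > 2α`,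
`0 < σ < 2α/(n−2α)`, there is `C > 0` (depending only on `n, α, σ`) such that every
measurable `u ∈ L²(ℝⁿ)` with finite Gagliardo seminorm
`[u]_α = (∫∫ |u(x)−u(y)|²/|x−y|^{n+2α})^{1/2}` lies in `L^{2σ+2}` with
`∫ |u|^{2σ+2} ≤ C · [u]_α^{nσ/α} · ‖u‖_{L²}^{2σ+2−nσ/α}`. -/
theorem stmt_14 (n : ℕ) (hn : 1 ≤ n) (α σ : ℝ) (hα : α ∈ Set.Ioo (0 : ℝ) 1)
    (h2α : 2 * α < n) (hσ₁ : 0 < σ) (hσ₂ : σ < 2 * α / ((n : ℝ) - 2 * α)) :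
    ∃ C : ℝ, 0 < C ∧ ∀ u : EuclideanSpace ℝ (Fin n) → ℂ, Measurable u →
      MemLp u 2 (volume : Measure (EuclideanSpace ℝ (Fin n))) →
      (∫⁻ x, ∫⁻ y, (‖u x - u y‖₊ : ℝ≥0∞) ^ 2
          / ENNReal.ofReal (‖x - y‖ ^ ((n : ℝ) + 2 * α))) < ⊤ →
      ∫⁻ x, (‖u x‖₊ : ℝ≥0∞) ^ (2 * σ + 2)
        ≤ ENNReal.ofReal (C
          * ((∫⁻ x, ∫⁻ y, (‖u x - u y‖₊ : ℝ≥0∞) ^ 2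
              / ENNReal.ofReal (‖x - y‖ ^ ((n : ℝ) + 2 * α))).toReal ^ (1 / 2 : ℝ))
              ^ ((n : ℝ) * σ / α)
          * ((eLpNorm u 2 (volume : Measure (EuclideanSpace ℝ (Fin n)))).toReal)
              ^ (2 * σ + 2 - (n : ℝ) * σ / α)) :=
  stmt_14_general n α σ hα h2α hσ₁ hσ₂
end
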